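/- Let n ≥ 3, R > 0 and β > 0, and define G : (0,∞) → ℝ by G(δ) = β / ( (n−2) R^{n−2}/(R+δ)^{n−1} + β ( 1 − R^{n−2}/(R+δ)^{n−2} ) ). Then for every δ > 0, G'(δ) < 0 if and only if δ > (n−1)/β − R, and G'(δ) > 0 if and only if δ < (n−1)/β − R. In particular, if β ≥ (n−1)/R then G is decreasing on (0,∞), while if β < (n−1)/R then G is increasing on (0, (n−1)/β − R) and decreasing on ((n−1)/β − R, ∞). -/

import Mathlib

/-!
Put `k = n - 2` and `x = R + δ`, and let `D` be the denominator of `G`. A direct computation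
gives `D'(x) = k R^k x^{-(k+2)} (β x - (k + 1))`, and `D > 0` for `x > R`, so
`G' = -β D' / D²` has the sign of `(k + 1)/β - x = (n - 1)/β - R - δ`. The monotonicity
statements follow from the mean value theorem.
-/

open Set

noncomputable def dispersionDenom (k : ℕ) (R β x : ℝ) : ℝ :=
  k * R ^ k / x ^ (k + 1) + β * (1 - R ^ k / x ^ k)

section

variable {k : ℕ} {R β x : ℝ}

theorem dispersionDenom_pos (hk : 0 < k) (hR : 0 < R) (hβ : 0 ≤ β) (hx : R < x) :
    0 < dispersionDenom k R β x := by
  have hx₀ : 0 < x := hR.trans hx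
  have hratio : R ^ k / x ^ k < 1 :=
    (div_lt_one (by positivity)).2 (pow_lt_pow_left₀ hx hR.le hk.ne')
  have : 0 < (k : ℝ) * R ^ k / x ^ (k + 1) := by positivity
  unfold dispersionDenom
  nlinarith

theorem hasDerivAt_dispersionDenom (hx : x ≠ 0) :
    HasDerivAt (dispersionDenom k R β) (k * R ^ k / x ^ (k + 2) * (β * x - (k + 1))) x := by
  have h := ((hasDerivAt_const x ((k : ℝ) * R ^ k)).fun_div (hasDerivAt_pow (k + 1) x)
    (pow_ne_zero _ hx)).fun_add (((hasDerivAt_const x (1 : ℝ)).fun_sub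
      ((hasDerivAt_const x (R ^ k)).fun_div (hasDerivAt_pow k x) (pow_ne_zero _ hx))).const_mul β)
  refine h.congr_deriv ?_
  rcases k with _ | k
  · simp
  · simp only [Nat.add_sub_cancel]
    field_simp
    push_cast
    ring

theorem hasDerivAt_div_dispersionDenom (hβ : β ≠ 0) (hx : x ≠ 0)
    (hD : dispersionDenom k R β x ≠ 0) :
    HasDerivAt (fun x => β / dispersionDenom k R β x)
      (β ^ 2 * k * R ^ k / (x ^ (k + 2) * dispersionDenom k R β x ^ 2) * ((k + 1) / β - x))
      x := by
  refine ((hasDerivAt_const x β).fun_div (hasDerivAt_dispersionDenom hx) hD).congr_deriv ?_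
  field_simp
  ring

variable (k R β) in
noncomputable def insulatedBallDispersion (δ : ℝ) : ℝ := β / dispersionDenom k R β (R + δ)

theorem hasDerivAt_insulatedBallDispersion (hk : 0 < k) (hR : 0 < R) (hβ : 0 < β)
    {δ : ℝ} (hδ : 0 < δ) :
    HasDerivAt (insulatedBallDispersion k R β)
      (β ^ 2 * k * R ^ k / ((R + δ) ^ (k + 2) * dispersionDenom k R β (R + δ) ^ 2)
        * ((k + 1) / β - R - δ)) δ := by
  have hRδ : R < R + δ := lt_add_of_pos_right R hδ
  have h := (hasDerivAt_div_dispersionDenom hβ.ne' (hR.trans hRδ).ne'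
    (dispersionDenom_pos hk hR hβ.le hRδ).ne').comp_const_add R δ
  rw [sub_sub]
  exact h

theorem deriv_insulatedBallDispersion_neg_iff_and_pos_iff (hk : 0 < k) (hR : 0 < R) (hβ : 0 < β)
    {δ : ℝ} (hδ : 0 < δ) :
    (deriv (insulatedBallDispersion k R β) δ < 0 ↔ (k + 1) / β - R < δ) ∧
      (0 < deriv (insulatedBallDispersion k R β) δ ↔ δ < (k + 1) / β - R) := by
  have hRδ : R < R + δ := lt_add_of_pos_right R hδ
  have hc :
      0 < β ^ 2 * k * R ^ k / ((R + δ) ^ (k + 2) * dispersionDenom k R β (R + δ) ^ 2) := by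
    have := dispersionDenom_pos hk hR hβ.le hRδ
    have : 0 < R + δ := hR.trans hRδ
    positivity
  rw [(hasDerivAt_insulatedBallDispersion hk hR hβ hδ).deriv, mul_pos_iff_of_pos_left hc]
  exact ⟨⟨fun h => sub_neg.1 (neg_of_mul_neg_right h hc.le),
    fun h => mul_neg_of_pos_of_neg hc (sub_neg.2 h)⟩, sub_pos⟩

theorem continuousOn_insulatedBallDispersion (hk : 0 < k) (hR : 0 < R) (hβ : 0 < β) :
    ContinuousOn (insulatedBallDispersion k R β) (Ioi 0) := fun _ hδ =>
  (hasDerivAt_insulatedBallDispersion hk hR hβ hδ).continuousAt.continuousWithinAt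

theorem strictMonoOn_insulatedBallDispersion (hk : 0 < k) (hR : 0 < R) (hβ : 0 < β) :
    StrictMonoOn (insulatedBallDispersion k R β) (Ioo 0 ((k + 1) / β - R)) := by
  refine strictMonoOn_of_deriv_pos (convex_Ioo _ _)
    ((continuousOn_insulatedBallDispersion hk hR hβ).mono Ioo_subset_Ioi_self) ?_
  rw [interior_Ioo]
  exact fun δ hδ => (deriv_insulatedBallDispersion_neg_iff_and_pos_iff hk hR hβ hδ.1).2.2 hδ.2

theorem strictAntiOn_insulatedBallDispersion (hk : 0 < k) (hR : 0 < R) (hβ : 0 < β) {c : ℝ}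
    (hc : 0 ≤ c) (hc' : (k + 1) / β - R ≤ c) :
    StrictAntiOn (insulatedBallDispersion k R β) (Ioi c) := by
  refine strictAntiOn_of_deriv_neg (convex_Ioi _)
    ((continuousOn_insulatedBallDispersion hk hR hβ).mono (Ioi_subset_Ioi hc)) ?_
  rw [interior_Ioi]
  exact fun δ hδ => (deriv_insulatedBallDispersion_neg_iff_and_pos_iff hk hR hβ
    (hc.trans_lt hδ)).1.2 (hc'.trans_lt hδ)

end

/-- Monotonicity analysis of
`G(δ) = β / ((n-2) R^{n-2}/(R+δ)^{n-1} + β (1 - R^{n-2}/(R+δ)^{n-2}))` for `n ≥ 3`: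
`G'(δ) < 0 ↔ δ > (n-1)/β - R` and `G'(δ) > 0 ↔ δ < (n-1)/β - R` on `(0,∞)`; hence `G`
is decreasing on `(0,∞)` when `β ≥ (n-1)/R`, while for `β < (n-1)/R` it is increasing
on `(0, (n-1)/β - R)` and decreasing on `((n-1)/β - R, ∞)`. -/
theorem monotonicity_G_ball
    (n : ℕ) (hn : 3 ≤ n) (R β : ℝ) (hR : 0 < R) (hβ : 0 < β)
    (G : ℝ → ℝ)
    (hG : ∀ δ : ℝ, G δ = β / (((n : ℝ) - 2) * R ^ (n - 2) / (R + δ) ^ (n - 1)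
      + β * (1 - R ^ (n - 2) / (R + δ) ^ (n - 2)))) :
    (∀ δ : ℝ, 0 < δ →
      ((deriv G δ < 0 ↔ ((n : ℝ) - 1) / β - R < δ) ∧
        (0 < deriv G δ ↔ δ < ((n : ℝ) - 1) / β - R))) ∧
    (((n : ℝ) - 1) / R ≤ β → StrictAntiOn G (Set.Ioi 0)) ∧
    (β < ((n : ℝ) - 1) / R →
      StrictMonoOn G (Set.Ioo 0 (((n : ℝ) - 1) / β - R)) ∧
      StrictAntiOn G (Set.Ioi (((n : ℝ) - 1) / β - R))) := by
  obtain ⟨k, rfl⟩ : ∃ k, n = k + 2 := ⟨n - 2, by omega⟩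
  have hk : 0 < k := by omega
  have hn₁ : ((k + 2 : ℕ) : ℝ) - 1 = k + 1 := by push_cast; ring
  have hG' : G = insulatedBallDispersion k R β := by
    funext δ
    rw [hG, insulatedBallDispersion, dispersionDenom, Nat.add_sub_cancel]
    push_cast
    ring
  subst hG'
  rw [hn₁]
  refine ⟨fun _ => deriv_insulatedBallDispersion_neg_iff_and_pos_iff hk hR hβ,
    fun hβR => strictAntiOn_insulatedBallDispersion hk hR hβ le_rfl ?_,
    fun hβR => ⟨strictMonoOn_insulatedBallDispersion hk hR hβ,
      strictAntiOn_insulatedBallDispersion hk hR hβ ?_ le_rfl⟩⟩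
  · rw [sub_nonpos, div_le_iff₀ hβ]
    rwa [div_le_iff₀ hR, mul_comm] at hβR
  · rw [sub_nonneg, le_div_iff₀ hβ]
    rw [lt_div_iff₀ hR, mul_comm] at hβR
    exact hβR.le
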